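/- Let μ_D(w) = ∫_{[0,1]^d} k_{σ/√2}(u,w) dD(u) for a finite signed measure D on [0,1]^d. Then for finite signed measures D₁, D₂ on [0,1]^d, (1/σ)^d·(2/π)^{d/2} · ∫_{ℝ^d} μ_{D₁}(w)·μ_{D₂}(w) dw = ∫_{[0,1]^d} ∫_{[0,1]^d} k_σ(u,v) dD₁(u) dD₂(v). -/

import Mathlib

open MeasureTheory Real

/- Completing the square, `k_s(u, w) k_s(v, w)` is `k_{√2 s}(u, v)` times a Gaussian in `w` centred
at `(u + v) / 2`, so integrating out `w` coordinate by coordinate gives `(√π |s|)^d k_{√2 s}(u, v)`;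
for `s = σ / √2` the prefactor `(1/σ)^d (2/π)^{d/2}` is exactly its inverse. For finite
measures `μ`, `ν` the bounded integrand is integrable on `μ × ν × volume`, so Fubini exchanges the
`w`-integral with the `(u, v)`-integrals, and the signed case follows by expanding both Jordan
decompositions. -/

/-- Integral of a real function against a finite signed measure, defined via the
Jordan decomposition. -/
noncomputable def signedIntegral {α : Type*} [MeasurableSpace α]
    (D : SignedMeasure α) (f : α → ℝ) : ℝ :=
  (∫ x, f x ∂D.toJordanDecomposition.posPart) -
    ∫ x, f x ∂D.toJordanDecomposition.negPart

/-- The Gaussian kernel on `ℝ^d` with bandwidth `s`. -/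
noncomputable def gaussKer (d : ℕ) (s : ℝ) (x y : Fin d → ℝ) : ℝ :=
  Real.exp (-(∑ i, (x i - y i) ^ 2) / (2 * s ^ 2))

/-- The unit cube `[0,1]^d`. -/
def unitCube (d : ℕ) : Set (Fin d → ℝ) := {x | ∀ i, x i ∈ Set.Icc (0:ℝ) 1}

lemma gaussKer_eq_prod (d : ℕ) (s : ℝ) (x y : Fin d → ℝ) :
    gaussKer d s x y = ∏ i, exp (-(x i - y i) ^ 2 / (2 * s ^ 2)) := by
  rw [gaussKer, ← exp_sum, ← Finset.sum_div, Finset.sum_neg_distrib]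

lemma gaussKer_nonneg (d : ℕ) (s : ℝ) (x y : Fin d → ℝ) : 0 ≤ gaussKer d s x y :=
  exp_nonneg _

lemma gaussKer_le_one (d : ℕ) (s : ℝ) (x y : Fin d → ℝ) : gaussKer d s x y ≤ 1 :=
  exp_le_one_iff.2 <| div_nonpos_of_nonpos_of_nonneg
    (neg_nonpos.2 <| Finset.sum_nonneg fun _ _ => sq_nonneg _) (by positivity)

lemma continuous_gaussKer (d : ℕ) (s : ℝ) :
    Continuous fun p : (Fin d → ℝ) × (Fin d → ℝ) => gaussKer d s p.1 p.2 := by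
  unfold gaussKer; fun_prop

section OneDim

variable {s : ℝ} (a b : ℝ)

lemma exp_sq_mul_exp_sq (hs : s ≠ 0) (x : ℝ) :
    exp (-(a - x) ^ 2 / (2 * s ^ 2)) * exp (-(b - x) ^ 2 / (2 * s ^ 2)) =
      exp (-(a - b) ^ 2 / (2 * (√2 * s) ^ 2)) * exp (-(1 / s ^ 2) * (x - (a + b) / 2) ^ 2) := by
  rw [← exp_add, ← exp_add, mul_pow, sq_sqrt zero_le_two]
  congr 1
  field_simp
  ring

lemma integrable_exp_sq_mul_exp_sq (hs : s ≠ 0) :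
    Integrable fun x => exp (-(a - x) ^ 2 / (2 * s ^ 2)) * exp (-(b - x) ^ 2 / (2 * s ^ 2)) := by
  simp_rw [exp_sq_mul_exp_sq a b hs]
  exact ((integrable_exp_neg_mul_sq (by positivity)).comp_sub_right _).const_mul _

lemma integral_exp_sq_mul_exp_sq (hs : s ≠ 0) :
    ∫ x, exp (-(a - x) ^ 2 / (2 * s ^ 2)) * exp (-(b - x) ^ 2 / (2 * s ^ 2)) =
      √π * |s| * exp (-(a - b) ^ 2 / (2 * (√2 * s) ^ 2)) := by
  simp_rw [exp_sq_mul_exp_sq a b hs]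
  rw [integral_const_mul, integral_sub_right_eq_self (fun x => exp (-(1 / s ^ 2) * x ^ 2)),
    integral_gaussian, div_div_eq_mul_div, div_one, sqrt_mul pi_pos.le, sqrt_sq_eq_abs, mul_comm]

end OneDim

section Convolution

variable {d : ℕ} {s : ℝ}

lemma gaussKer_mul_gaussKer_eq_prod (u v w : Fin d → ℝ) :
    gaussKer d s u w * gaussKer d s v w =
      ∏ i, exp (-(u i - w i) ^ 2 / (2 * s ^ 2)) * exp (-(v i - w i) ^ 2 / (2 * s ^ 2)) := by
  rw [gaussKer_eq_prod, gaussKer_eq_prod, Finset.prod_mul_distrib]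

lemma integrable_gaussKer_mul_gaussKer (hs : s ≠ 0) (u v : Fin d → ℝ) :
    Integrable fun w => gaussKer d s u w * gaussKer d s v w := by
  simp_rw [gaussKer_mul_gaussKer_eq_prod]
  exact Integrable.fintype_prod
    (f := fun i x => exp (-(u i - x) ^ 2 / (2 * s ^ 2)) * exp (-(v i - x) ^ 2 / (2 * s ^ 2)))
    fun i => integrable_exp_sq_mul_exp_sq (u i) (v i) hs

lemma integral_gaussKer_mul_gaussKer (hs : s ≠ 0) (u v : Fin d → ℝ) :
    ∫ w, gaussKer d s u w * gaussKer d s v w = (√π * |s|) ^ d * gaussKer d (√2 * s) u v := by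
  simp_rw [gaussKer_mul_gaussKer_eq_prod]
  rw [integral_fintype_prod_volume_eq_prod
    (f := fun i x => exp (-(u i - x) ^ 2 / (2 * s ^ 2)) * exp (-(v i - x) ^ 2 / (2 * s ^ 2)))]
  simp_rw [integral_exp_sq_mul_exp_sq _ _ hs]
  rw [Finset.prod_mul_distrib, Finset.prod_const, Finset.card_univ, Fintype.card_fin,
    gaussKer_eq_prod]

end Convolution

section FiniteMeasures

variable {d : ℕ} (μ ν : Measure (Fin d → ℝ)) [IsFiniteMeasure μ] [IsFiniteMeasure ν]

lemma integrable_gaussKer_prod (s : ℝ) :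
    Integrable (fun p : (Fin d → ℝ) × (Fin d → ℝ) => gaussKer d s p.1 p.2) (μ.prod ν) :=
  .of_bound (continuous_gaussKer d s).aestronglyMeasurable 1 <| ae_of_all _ fun p => by
    rw [norm_of_nonneg (gaussKer_nonneg ..)]
    exact gaussKer_le_one ..

lemma integrable_integral_gaussKer (s : ℝ) :
    Integrable (fun u => ∫ v, gaussKer d s u v ∂ν) μ :=
  (integrable_gaussKer_prod μ ν s).integral_prod_left

lemma integrable_gaussKer_mul_gaussKer_prod {s : ℝ} (hs : s ≠ 0) :
    Integrable (Function.uncurry fun (p : (Fin d → ℝ) × (Fin d → ℝ)) w =>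
      gaussKer d s p.1 w * gaussKer d s p.2 w) ((μ.prod ν).prod volume) := by
  have hF : Continuous fun q : ((Fin d → ℝ) × (Fin d → ℝ)) × (Fin d → ℝ) =>
      gaussKer d s q.1.1 q.2 * gaussKer d s q.1.2 q.2 := by
    unfold gaussKer; fun_prop
  refine (integrable_prod_iff hF.aestronglyMeasurable).2
    ⟨ae_of_all _ fun p => integrable_gaussKer_mul_gaussKer hs p.1 p.2, ?_⟩
  simp_rw [fun (p : (Fin d → ℝ) × (Fin d → ℝ)) w =>
    norm_of_nonneg (mul_nonneg (gaussKer_nonneg d s p.1 w) (gaussKer_nonneg d s p.2 w)),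
    integral_gaussKer_mul_gaussKer hs]
  exact (integrable_gaussKer_prod μ ν _).const_mul _

lemma integral_integral_gaussKer_mul_integral_gaussKer {s : ℝ} (hs : s ≠ 0) :
    ∫ w, (∫ u, gaussKer d s u w ∂μ) * (∫ v, gaussKer d s v w ∂ν) =
      (√π * |s|) ^ d * ∫ u, ∫ v, gaussKer d (√2 * s) u v ∂ν ∂μ := by
  simp_rw [← integral_prod_mul (μ := μ) (ν := ν)]
  rw [← integral_integral_swap (integrable_gaussKer_mul_gaussKer_prod μ ν hs)]
  simp_rw [integral_gaussKer_mul_gaussKer hs]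
  rw [integral_const_mul, integral_prod _ (integrable_gaussKer_prod μ ν _)]

lemma integrable_integral_gaussKer_mul_integral_gaussKer {s : ℝ} (hs : s ≠ 0) :
    Integrable fun w => (∫ u, gaussKer d s u w ∂μ) * (∫ v, gaussKer d s v w ∂ν) := by
  simp_rw [← integral_prod_mul (μ := μ) (ν := ν)]
  exact (integrable_gaussKer_mul_gaussKer_prod μ ν hs).integral_prod_right

end FiniteMeasures

lemma gaussian_normalization {σ : ℝ} (hσ : 0 < σ) (d : ℕ) :
    (1 / σ) ^ d * (2 / π) ^ ((d : ℝ) / 2) * (√π * |σ / √2|) ^ d = 1 := by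
  rw [rpow_div_two_eq_sqrt _ (by positivity), rpow_natCast, ← mul_pow, ← mul_pow,
    abs_of_pos (by positivity), sqrt_div' _ pi_pos.le]
  have : √π ≠ 0 := (sqrt_pos.2 pi_pos).ne'
  field_simp
  simp

theorem integral_integral_gaussKer_mul_integral_gaussKer_div_sqrt_two {d : ℕ} {σ : ℝ}
    (hσ : 0 < σ) (μ ν : Measure (Fin d → ℝ)) [IsFiniteMeasure μ] [IsFiniteMeasure ν] :
    (1 / σ) ^ d * (2 / π) ^ ((d : ℝ) / 2) *
        ∫ w, (∫ u, gaussKer d (σ / √2) u w ∂μ) * (∫ v, gaussKer d (σ / √2) v w ∂ν) =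
      ∫ u, ∫ v, gaussKer d σ u v ∂ν ∂μ := by
  rw [integral_integral_gaussKer_mul_integral_gaussKer μ ν (by positivity),
    mul_div_cancel₀ _ (by positivity), ← mul_assoc, gaussian_normalization hσ, one_mul]

lemma integral_sub_mul_sub {α : Type*} [MeasurableSpace α] {μ : Measure α} {f₁ g₁ f₂ g₂ : α → ℝ}
    (hff : Integrable (fun x => f₁ x * f₂ x) μ) (hfg : Integrable (fun x => f₁ x * g₂ x) μ)
    (hgf : Integrable (fun x => g₁ x * f₂ x) μ) (hgg : Integrable (fun x => g₁ x * g₂ x) μ) :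
    ∫ x, (f₁ x - g₁ x) * (f₂ x - g₂ x) ∂μ =
      (∫ x, f₁ x * f₂ x ∂μ) - (∫ x, f₁ x * g₂ x ∂μ) - (∫ x, g₁ x * f₂ x ∂μ) +
        ∫ x, g₁ x * g₂ x ∂μ := by
  simp_rw [sub_mul, mul_sub]
  rw [integral_sub (hff.sub' hfg) (hgf.sub' hgg), integral_sub hff hfg, integral_sub hgf hgg]
  ring

theorem stmt_16_general (d : ℕ) (σ : ℝ) (hσ : 0 < σ)
    (D₁ D₂ : SignedMeasure (Fin d → ℝ)) :
    (1 / σ) ^ d * (2 / Real.pi) ^ ((d : ℝ) / 2) *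
        ∫ w : Fin d → ℝ,
          signedIntegral D₁ (fun u => gaussKer d (σ / Real.sqrt 2) u w) *
            signedIntegral D₂ (fun u => gaussKer d (σ / Real.sqrt 2) u w) =
      signedIntegral D₁ fun u => signedIntegral D₂ fun v => gaussKer d σ u v := by
  have hs : σ / √2 ≠ 0 := by positivity
  set P₁ := D₁.toJordanDecomposition.posPart
  set N₁ := D₁.toJordanDecomposition.negPart
  set P₂ := D₂.toJordanDecomposition.posPart
  set N₂ := D₂.toJordanDecomposition.negPart
  simp only [signedIntegral]
  rw [integral_sub_mul_sub (integrable_integral_gaussKer_mul_integral_gaussKer P₁ P₂ hs)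
      (integrable_integral_gaussKer_mul_integral_gaussKer P₁ N₂ hs)
      (integrable_integral_gaussKer_mul_integral_gaussKer N₁ P₂ hs)
      (integrable_integral_gaussKer_mul_integral_gaussKer N₁ N₂ hs),
    integral_sub (integrable_integral_gaussKer P₁ P₂ σ) (integrable_integral_gaussKer P₁ N₂ σ),
    integral_sub (integrable_integral_gaussKer N₁ P₂ σ) (integrable_integral_gaussKer N₁ N₂ σ),
    ← integral_integral_gaussKer_mul_integral_gaussKer_div_sqrt_two hσ P₁ P₂,
    ← integral_integral_gaussKer_mul_integral_gaussKer_div_sqrt_two hσ P₁ N₂,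
    ← integral_integral_gaussKer_mul_integral_gaussKer_div_sqrt_two hσ N₁ P₂,
    ← integral_integral_gaussKer_mul_integral_gaussKer_div_sqrt_two hσ N₁ N₂]
  ring

theorem stmt_16 (d : ℕ) (σ : ℝ) (hσ : 0 < σ)
    (D₁ D₂ : SignedMeasure (Fin d → ℝ))
    (hD₁ : ∀ A : Set (Fin d → ℝ), MeasurableSet A → A ∩ unitCube d = ∅ → D₁ A = 0)
    (hD₂ : ∀ A : Set (Fin d → ℝ), MeasurableSet A → A ∩ unitCube d = ∅ → D₂ A = 0) :
    (1 / σ) ^ d * (2 / Real.pi) ^ ((d : ℝ) / 2) *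
        ∫ w : Fin d → ℝ,
          signedIntegral D₁ (fun u => gaussKer d (σ / Real.sqrt 2) u w) *
            signedIntegral D₂ (fun u => gaussKer d (σ / Real.sqrt 2) u w) =
      signedIntegral D₁ fun u => signedIntegral D₂ fun v => gaussKer d σ u v :=
  stmt_16_general d σ hσ D₁ D₂
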